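/- Let 0 ≤ d₁, d₂ ≤ 2(q²−1). The evaluations over F_{q²}² of the monomials in U_{d₁,d₂} form a basis of RM_{d₁}(q²,2) ∩ RM_{d₂}^{⊥h}(q²,2). -/

import Mathlib

open MvPolynomial

/-- Evaluation of bivariate polynomials at all points of the affine plane. -/
noncomputable def evA (F : Type*) [Field F] :
    MvPolynomial (Fin 2) F →ₗ[F] ((Fin 2 → F) → F) :=
  LinearMap.pi fun Q => (aeval Q).toLinearMap

/-- The affine Reed–Muller code of degree `e` in two variables. -/
noncomputable def RM (F : Type*) [Field F] (e : ℕ) : Submodule F ((Fin 2 → F) → F) :=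
  (restrictTotalDegree (Fin 2) F e).map (evA F)

/-- The Hermitian dual of a code over `F_{q²}` (defined using `x ↦ x^q`). -/
noncomputable def hermDualA {F : Type*} [Field F] [Fintype F] (q : ℕ)
    (Ccode : Submodule F ((Fin 2 → F) → F)) : Submodule F ((Fin 2 → F) → F) where
  carrier := {v | ∀ w ∈ Ccode, ∑ i, v i * (w i) ^ q = 0}
  add_mem' := by
    intro a b ha hb w hw
    simp only [Set.mem_setOf_eq] at ha hb ⊢
    simp [Pi.add_apply, add_mul, Finset.sum_add_distrib, ha w hw, hb w hw]
  zero_mem' := by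
    intro w hw
    simp
  smul_mem' := by
    intro c a ha w hw
    simp only [Set.mem_setOf_eq] at ha ⊢
    simp [Pi.smul_apply, smul_eq_mul, mul_assoc, ← Finset.mul_sum, ha w hw]

/-- `ob N z` is the representative `z̄` of `z` modulo `N−1`: it satisfies
`1 ≤ z̄ ≤ N−1` and `z̄ ≡ z (mod N−1)` if `z > 0`, and `z̄ = 0` if `z = 0`. -/
def ob (N z : ℕ) : ℕ := if z = 0 then 0 else (z - 1) % (N - 1) + 1

/-- The set of monomials `U_{d₁,d₂}` (in the variables `x₁ = X 0`, `x₂ = X 1`). -/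
def Uset (F : Type*) [Field F] (q d₁ d₂ : ℕ) : Set (MvPolynomial (Fin 2) F) :=
  {M | ∃ a₁ a₂ : ℕ, a₁ ≤ q ^ 2 - 1 ∧ a₂ ≤ q ^ 2 - 1 ∧ a₁ + a₂ ≤ d₁ ∧
    (ob (q ^ 2) (q * a₁) : ℤ) + (ob (q ^ 2) (q * a₂) : ℤ) ≤
      2 * ((q : ℤ) ^ 2 - 1) - d₂ - 1 ∧
    M = X 0 ^ a₁ * X 1 ^ a₂}

/-!
Over a field with `q²` elements, `∑ₜ tᵐ` is `-1` if `m > 0` and `q² - 1 ∣ m`, and `0` otherwise,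
and `t ^ z = t ^ z̄`. So both codes are spanned by evaluations of reduced monomials `xᵃ`
(exponents at most `q² - 1`), and the Hermitian pairing of `xᵃ` with `xᵇ` factors as
`∏ᵢ ∑ₜ t ^ (aᵢ + q bᵢ)`. As `q² ≡ 1 (mod q² - 1)`, the `i`-th factor vanishes unless
`bᵢ ≥ q² - 1 - \overline{q aᵢ} = dualExp q aᵢ`, and it is nonzero for `bᵢ = dualExp q aᵢ`.
Hence `xᵃ` is orthogonal to `RM_{d₂}` as soon as `d₂ < ∑ᵢ dualExp q aᵢ`, which is the condition
defining `U_{d₁,d₂}`. Conversely, pairing `∑ c_a xᵃ ∈ RM_{d₁}` with the monomials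
`x^{dualExp q a}` gives a system that is unitriangular with respect to total degree, so if the
vector is orthogonal to `RM_{d₂}` then `c_a = 0` whenever `∑ᵢ dualExp q aᵢ ≤ d₂`. Applied to the
zero vector, the same system gives the linear independence of the reduced monomials.
-/

open Finset

namespace ob

variable {N : ℕ}

theorem le_sub_one (hN : 2 ≤ N) (z : ℕ) : ob N z ≤ N - 1 := by
  unfold ob; split
  · omega
  · have := Nat.mod_lt (z - 1) (show 0 < N - 1 by omega)
    omega

theorem le_self (z : ℕ) : ob N z ≤ z := by
  unfold ob; split
  · omega
  · have := Nat.mod_le (z - 1) (N - 1)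
    omega

theorem eq_zero_iff {z : ℕ} : ob N z = 0 ↔ z = 0 := by
  unfold ob; split <;> simp_all

theorem modEq (z : ℕ) : ob N z ≡ z [MOD N - 1] := by
  unfold ob; split
  · simp_all [Nat.ModEq.refl]
  · conv_rhs => rw [← Nat.sub_add_cancel (Nat.one_le_iff_ne_zero.mpr ‹z ≠ 0›)]
    exact (Nat.mod_modEq _ _).add_right 1

theorem natCast_zmod (z : ℕ) : (ob N z : ZMod (N - 1)) = z :=
  (ZMod.natCast_eq_natCast_iff _ _ _).mpr (modEq z)

end ob

theorem pow_ob {F : Type*} [Field F] [Fintype F] (t : F) (z : ℕ) :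
    t ^ ob (Fintype.card F) z = t ^ z := by
  rcases eq_or_ne t 0 with rfl | ht
  · simp [zero_pow_eq, ob.eq_zero_iff]
  · obtain ⟨k, hk⟩ := (Nat.modEq_iff_dvd' (ob.le_self z)).mp (ob.modEq (N := Fintype.card F) z)
    have hz : z = (Fintype.card F - 1) * k + ob (Fintype.card F) z := by
      have := ob.le_self (N := Fintype.card F) z
      omega
    conv_rhs => rw [hz, pow_add, pow_mul, FiniteField.pow_card_sub_one_eq_one t ht, one_pow,
      one_mul]

theorem FiniteField.sum_pow_eq_ite {F : Type*} [Field F] [Fintype F] (m : ℕ) :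
    ∑ t : F, t ^ m = if m ≠ 0 ∧ Fintype.card F - 1 ∣ m then -1 else 0 := by
  classical
  rcases eq_or_ne m 0 with rfl | hm
  · simp
  have hunits : ∑ u : Fˣ, (u : F) ^ m = ∑ t ∈ univ.filter (· ≠ 0), t ^ m := by
    rw [sum_subtype _ (fun t => mem_filter_univ t)]
    exact Fintype.sum_equiv unitsEquivNeZero _ _ fun _ => rfl
  rw [← sum_filter_add_sum_filter_not univ (· ≠ 0), ← hunits, FiniteField.sum_pow_units]
  have hzero : ∑ t ∈ univ.filter (fun t : F => ¬t ≠ 0), t ^ m = 0 :=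
    sum_eq_zero fun t ht => by simp_all [zero_pow hm]
  rw [hzero, add_zero]
  simp [hm]

theorem FiniteField.add_pow_of_dvd_card {F : Type*} [Field F] [Fintype F] {q : ℕ}
    (hq : q ∣ Fintype.card F) (x y : F) : (x + y) ^ q = x ^ q + y ^ q := by
  obtain ⟨p, _, n, hp, hcard⟩ := FiniteField.card' F
  have := Fact.mk hp
  obtain ⟨m, -, rfl⟩ := (Nat.dvd_prime_pow hp).mp (hcard ▸ hq)
  exact add_pow_char_pow x y p m

section HermForm

variable {F : Type*} [Field F] {ι σ : Type*} [Fintype ι] [Fintype σ]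

def hermForm (q : ℕ) (v w : ι → F) : F := ∑ i, v i * w i ^ q

theorem hermForm_sum_smul {α : Type*} (q : ℕ) (s : Finset α) (c : α → F) (f : α → ι → F)
    (w : ι → F) : hermForm q (∑ j ∈ s, c j • f j) w = ∑ j ∈ s, c j * hermForm q (f j) w := by
  simp only [hermForm, Finset.sum_apply, Pi.smul_apply, smul_eq_mul, sum_mul, mul_sum, mul_assoc]
  exact sum_comm

def monomialFn (F : Type*) [CommMonoid F] (a : σ → ℕ) : (σ → F) → F := fun P => ∏ i, P i ^ a i

theorem hermForm_monomialFn [Fintype F] [DecidableEq σ] (q : ℕ) (a b : σ → ℕ) :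
    hermForm q (monomialFn F a) (monomialFn F b) = ∏ i, ∑ t : F, t ^ (a i + q * b i) := by
  rw [Fintype.prod_sum]
  refine sum_congr rfl fun P _ => ?_
  simp only [monomialFn, ← prod_pow, ← prod_mul_distrib, pow_add, pow_mul']

end HermForm

theorem Nat.eq_or_of_modEq_of_le {n x y : ℕ} (h : x ≡ y [MOD n]) (hx : x ≤ n) (hy : y ≤ n) :
    x = y ∨ (x = 0 ∧ y = n) ∨ (x = n ∧ y = 0) := by
  rcases hx.lt_or_eq with hx | rfl <;> rcases hy.lt_or_eq with hy | rfl
  · exact Or.inl (h.eq_of_lt_of_lt hx hy)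
  · rw [Nat.ModEq, Nat.mod_self, Nat.mod_eq_of_lt hx] at h
    exact Or.inr (Or.inl ⟨h, rfl⟩)
  · rw [Nat.ModEq, Nat.mod_self, Nat.mod_eq_of_lt hy] at h
    exact Or.inr (Or.inr ⟨rfl, h.symm⟩)
  · exact Or.inl rfl

def dualExp (q x : ℕ) : ℕ := q ^ 2 - 1 - ob (q ^ 2) (q * x)

section DualExp

variable {q : ℕ}

theorem natCast_sq_eq_one_mod_sq_sub_one (hq : q ≠ 0) : (q : ZMod (q ^ 2 - 1)) ^ 2 = 1 := by
  rw [← Nat.cast_pow, ← Nat.sub_add_cancel (Nat.one_le_pow 2 q (Nat.pos_of_ne_zero hq)),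
    Nat.cast_add, ZMod.natCast_self, zero_add, Nat.cast_one]

theorem dualExp_le_of_dvd (hq : q ≠ 0) {x y : ℕ} (hne : x + q * y ≠ 0)
    (hdvd : q ^ 2 - 1 ∣ x + q * y) : dualExp q x ≤ y := by
  have hcast : ((ob (q ^ 2) (q * x) + y : ℕ) : ZMod (q ^ 2 - 1)) = q * (x + q * y : ℕ) := by
    push_cast [ob.natCast_zmod]
    linear_combination (-(y : ZMod (q ^ 2 - 1))) * natCast_sq_eq_one_mod_sq_sub_one hq
  rw [(ZMod.natCast_eq_zero_iff _ _).mpr hdvd, mul_zero, ZMod.natCast_eq_zero_iff] at hcast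
  have hpos : ob (q ^ 2) (q * x) + y ≠ 0 := by
    simp only [ne_eq, Nat.add_eq_zero_iff, ob.eq_zero_iff, mul_eq_zero] at hne ⊢
    tauto
  have := Nat.le_of_dvd (Nat.pos_of_ne_zero hpos) hcast
  unfold dualExp
  omega

theorem natCast_add_mul_dualExp (hq : 2 ≤ q) (x b : ℕ) :
    ((x + q * dualExp q b : ℕ) : ZMod (q ^ 2 - 1)) = x - b := by
  have hob := ob.le_sub_one (N := q ^ 2) (by nlinarith) (q * b)
  rw [dualExp, Nat.cast_add, Nat.cast_mul, Nat.cast_sub hob, ob.natCast_zmod, ZMod.natCast_self]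
  push_cast
  linear_combination (-(b : ZMod (q ^ 2 - 1))) * natCast_sq_eq_one_mod_sq_sub_one (by omega : q ≠ 0)

theorem dvd_add_mul_dualExp_self (hq : 2 ≤ q) (x : ℕ) : q ^ 2 - 1 ∣ x + q * dualExp q x := by
  rw [← ZMod.natCast_eq_zero_iff, natCast_add_mul_dualExp hq, sub_self]

theorem add_mul_dualExp_self_ne_zero (hq : 2 ≤ q) (x : ℕ) : x + q * dualExp q x ≠ 0 := by
  rcases eq_or_ne x 0 with rfl | hx
  · have : 4 ≤ q ^ 2 := by nlinarith
    simp [dualExp, ob]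
    omega
  · omega

theorem dualExp_sq_sub_one (hq : 2 ≤ q) : dualExp q (q ^ 2 - 1) = 0 := by
  have hN : 2 ≤ q ^ 2 := by nlinarith
  have hdvd : q ^ 2 - 1 ∣ ob (q ^ 2) (q * (q ^ 2 - 1)) := by
    rw [← ZMod.natCast_eq_zero_iff, ob.natCast_zmod]
    simp
  have hpos : ob (q ^ 2) (q * (q ^ 2 - 1)) ≠ 0 := by
    rw [Ne, ob.eq_zero_iff]
    exact Nat.mul_ne_zero (by omega) (by omega)
  have := Nat.le_of_dvd (Nat.pos_of_ne_zero hpos) hdvd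
  unfold dualExp
  omega

theorem eq_or_of_dvd_add_mul_dualExp (hq : 2 ≤ q) {x b : ℕ} (hx : x ≤ q ^ 2 - 1)
    (hb : b ≤ q ^ 2 - 1) (hne : x + q * dualExp q b ≠ 0) (hdvd : q ^ 2 - 1 ∣ x + q * dualExp q b) :
    x = b ∨ (b = 0 ∧ x = q ^ 2 - 1) := by
  rw [← ZMod.natCast_eq_zero_iff, natCast_add_mul_dualExp hq, sub_eq_zero,
    ZMod.natCast_eq_natCast_iff] at hdvd
  rcases Nat.eq_or_of_modEq_of_le hdvd hx hb with h | ⟨rfl, rfl⟩ | ⟨rfl, rfl⟩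
  · exact Or.inl h
  · simp [dualExp_sq_sub_one hq] at hne
  · exact Or.inr ⟨rfl, rfl⟩

end DualExp

theorem two_le_of_card_eq_sq {F : Type*} [Field F] [Fintype F] {q : ℕ}
    (hq : Fintype.card F = q ^ 2) : 2 ≤ q := by
  have h := hq ▸ Fintype.one_lt_card (α := F)
  by_contra! hlt
  interval_cases q <;> simp at h

def Dominates {σ : Type*} (n : ℕ) (j a : σ → ℕ) : Prop := ∀ i, j i = a i ∨ (a i = 0 ∧ j i = n)

theorem Dominates.sum_lt {σ : Type*} [Fintype σ] {n : ℕ} {j a : σ → ℕ} (h : Dominates n j a)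
    (hne : j ≠ a) (hn : n ≠ 0) : ∑ i, a i < ∑ i, j i := by
  obtain ⟨i, hi⟩ := Function.ne_iff.mp hne
  refine sum_lt_sum (fun k _ => ?_) ⟨i, mem_univ i, ?_⟩
  · rcases h k with hk | ⟨hk, -⟩ <;> omega
  · rcases h i with hi' | ⟨hi', hj⟩
    · exact absurd hi' hi
    · rw [hi', hj]
      exact Nat.pos_of_ne_zero hn

theorem Dominates.dualExp_le {σ : Type*} {q : ℕ} {j a : σ → ℕ} (h : Dominates (q ^ 2 - 1) j a)
    (i : σ) : dualExp q (j i) ≤ dualExp q (a i) := by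
  rcases h i with hi | ⟨hi, -⟩
  · rw [hi]
  · simp only [dualExp, hi, mul_zero, ob, if_true]
    omega

section Pairing

variable {F : Type*} [Field F] [Fintype F] {q : ℕ} {σ : Type*} [Fintype σ] [DecidableEq σ]

theorem dualExp_le_of_hermForm_monomialFn_ne_zero (hq : Fintype.card F = q ^ 2) {a b : σ → ℕ}
    (h : hermForm q (monomialFn F a) (monomialFn F b) ≠ 0) (i : σ) : dualExp q (a i) ≤ b i := by
  rw [hermForm_monomialFn] at h
  have hi := prod_ne_zero_iff.mp h i (mem_univ i)
  rw [FiniteField.sum_pow_eq_ite, hq, ite_ne_right_iff] at hi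
  exact dualExp_le_of_dvd (by have := two_le_of_card_eq_sq hq; omega) hi.1.1 hi.1.2

theorem hermForm_monomialFn_dualExp_self (hq : Fintype.card F = q ^ 2) (a : σ → ℕ) :
    hermForm q (monomialFn F a) (monomialFn F (dualExp q ∘ a)) = (-1) ^ Fintype.card σ := by
  have hq2 := two_le_of_card_eq_sq hq
  rw [hermForm_monomialFn, ← card_univ, ← prod_const]
  refine prod_congr rfl fun i _ => ?_
  rw [FiniteField.sum_pow_eq_ite, hq, Function.comp_apply,
    if_pos ⟨add_mul_dualExp_self_ne_zero hq2 _, dvd_add_mul_dualExp_self hq2 _⟩]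

theorem dominates_of_hermForm_monomialFn_dualExp_ne_zero (hq : Fintype.card F = q ^ 2)
    {j a : σ → ℕ} (hj : ∀ i, j i ≤ q ^ 2 - 1) (ha : ∀ i, a i ≤ q ^ 2 - 1)
    (h : hermForm q (monomialFn F j) (monomialFn F (dualExp q ∘ a)) ≠ 0) :
    Dominates (q ^ 2 - 1) j a := by
  rw [hermForm_monomialFn] at h
  intro i
  have hi := prod_ne_zero_iff.mp h i (mem_univ i)
  rw [FiniteField.sum_pow_eq_ite, hq, ite_ne_right_iff] at hi
  exact eq_or_of_dvd_add_mul_dualExp (two_le_of_card_eq_sq hq) (hj i) (ha i) hi.1.1 hi.1.2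

theorem apply_eq_zero_of_hermForm_dualExp_eq_zero (hq : Fintype.card F = q ^ 2)
    {c : (σ → ℕ) →₀ F} (hc : ∀ j ∈ c.support, ∀ i, j i ≤ q ^ 2 - 1) {T : Set (σ → ℕ)}
    (hT : ∀ a ∈ T, ∀ j ∈ c.support, Dominates (q ^ 2 - 1) j a → j ∈ T)
    (horth : ∀ a ∈ T, hermForm q (Finsupp.linearCombination F (monomialFn F) c)
      (monomialFn F (dualExp q ∘ a)) = 0) :
    ∀ a ∈ T, c a = 0 := by
  classical
  by_contra! hex
  obtain ⟨a₀, ha₀T, hca₀⟩ := hex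
  -- every other `j` seen by the pairing with `x ^ dualExp q a` dominates `a`, so has larger degree
  obtain ⟨a, ha, hmax⟩ := (c.support.filter (· ∈ T)).exists_max_image (fun a => ∑ i, a i)
    ⟨a₀, mem_filter.mpr ⟨Finsupp.mem_support_iff.mpr hca₀, ha₀T⟩⟩
  obtain ⟨has, haT⟩ := mem_filter.mp ha
  have hn : q ^ 2 - 1 ≠ 0 := by
    have := Nat.pow_le_pow_left (two_le_of_card_eq_sq hq) 2
    omega
  have hpair : hermForm q (Finsupp.linearCombination F (monomialFn F) c)
      (monomialFn F (dualExp q ∘ a)) = c a * (-1) ^ Fintype.card σ := by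
    rw [Finsupp.linearCombination_apply, Finsupp.sum, hermForm_sum_smul,
      sum_eq_single a _ (fun h => absurd has h), hermForm_monomialFn_dualExp_self hq]
    intro j hj hja
    by_contra hne
    have hdom := dominates_of_hermForm_monomialFn_dualExp_ne_zero hq (hc j hj) (hc a has)
      (right_ne_zero_of_mul hne)
    exact (hmax j (mem_filter.mpr ⟨hj, hT a haT j hj hdom⟩)).not_gt (hdom.sum_lt hja hn)
  rw [horth a haT] at hpair
  exact Finsupp.mem_support_iff.mp has (by simpa using hpair.symm)

end Pairing

def reducedExps {σ : Type*} [Fintype σ] (n e : ℕ) : Set (σ → ℕ) :=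
  {a | (∀ i, a i ≤ n) ∧ ∑ i, a i ≤ e}

theorem linearIndepOn_monomialFn {F : Type*} [Field F] [Fintype F] {q : ℕ} {σ : Type*}
    [Fintype σ] [DecidableEq σ] (hq : Fintype.card F = q ^ 2) :
    LinearIndepOn F (monomialFn F) {a : σ → ℕ | ∀ i, a i ≤ q ^ 2 - 1} := by
  refine linearIndepOn_iff.mpr fun c hc hzero => Finsupp.ext fun a => ?_
  refine apply_eq_zero_of_hermForm_dualExp_eq_zero hq (fun j hj => hc hj) (T := Set.univ)
    (fun _ _ _ _ _ => trivial) (fun _ _ => ?_) a trivial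
  simp [hzero, hermForm]

section TwoVariables

variable {F : Type*} [Field F]

theorem evA_monomial (s : Fin 2 →₀ ℕ) : evA F (monomial s 1) = monomialFn F s := by
  funext P
  simp [evA, monomialFn, aeval_monomial, Finsupp.prod_fintype]

theorem evA_X_pow_mul_X_pow (a : Fin 2 → ℕ) :
    evA F (X 0 ^ a 0 * X 1 ^ a 1) = monomialFn F a := by
  funext P
  simp [evA, monomialFn, Fin.prod_univ_two]

variable [Fintype F] {q : ℕ}

theorem mem_hermDualA_span_iff (hq : q ∣ Fintype.card F)
    {S : Set ((Fin 2 → F) → F)} {v : (Fin 2 → F) → F} :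
    v ∈ hermDualA q (Submodule.span F S) ↔ ∀ w ∈ S, hermForm q v w = 0 := by
  refine ⟨fun h w hw => h w (Submodule.subset_span hw), fun h w hw => ?_⟩
  induction hw using Submodule.span_induction with
  | mem w hw => exact h w hw
  | zero => simp [zero_pow (ne_zero_of_dvd_ne_zero Fintype.card_ne_zero hq)]
  | add w w' _ _ hw hw' =>
    simpa [FiniteField.add_pow_of_dvd_card hq, mul_add, sum_add_distrib] using
      congrArg₂ (· + ·) hw hw'
  | smul a w _ hw =>
    simpa [mul_pow, mul_left_comm _ (a ^ q), ← mul_sum] using congrArg (a ^ q * ·) hw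

theorem RM_eq_span (e : ℕ) :
    RM F e = Submodule.span F (monomialFn F '' reducedExps (Fintype.card F - 1) e) := by
  have hmon : (evA F ∘ fun s => monomial s 1) '' {s : Fin 2 →₀ ℕ | (s.sum fun _ k => k) ≤ e} =
      monomialFn F '' {a | ∑ i, a i ≤ e} := by
    ext f
    constructor
    · rintro ⟨s, hs, rfl⟩
      exact ⟨s, by simpa [Finsupp.sum_fintype] using hs, (evA_monomial s).symm⟩
    · rintro ⟨a, ha, rfl⟩
      refine ⟨Finsupp.equivFunOnFinite.symm a, ?_, evA_monomial _⟩
      simpa [Finsupp.sum_fintype] using ha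
  rw [RM, restrictTotalDegree, restrictSupport_eq_span, Submodule.map_span, ← Set.image_comp,
    hmon]
  refine le_antisymm (Submodule.span_le.mpr ?_)
    (Submodule.span_mono (Set.image_mono fun a ha => ha.2))
  rintro _ ⟨a, ha, rfl⟩
  have hN : 2 ≤ Fintype.card F := Fintype.one_lt_card
  refine Submodule.subset_span ⟨fun i => ob (Fintype.card F) (a i),
    ⟨fun i => ob.le_sub_one hN _, (sum_le_sum fun i _ => ob.le_self _).trans ha⟩, ?_⟩
  funext P
  simp [monomialFn, pow_ob]

theorem RM_inf_hermDualA_RM_eq_span (hq : Fintype.card F = q ^ 2) (d₁ d₂ : ℕ) :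
    RM F d₁ ⊓ hermDualA q (RM F d₂) = Submodule.span F
      (monomialFn F '' {a | a ∈ reducedExps (q ^ 2 - 1) d₁ ∧ d₂ < ∑ i, dualExp q (a i)}) := by
  have hdvd : q ∣ Fintype.card F := hq ▸ dvd_pow_self q two_ne_zero
  have hdual : ∀ a : Fin 2 → ℕ, ∑ i, dualExp q (a i) ≤ d₂ →
      monomialFn F (dualExp q ∘ a) ∈ RM F d₂ := fun a ha => by
    rw [RM_eq_span, hq]
    exact Submodule.subset_span ⟨_, ⟨fun i => Nat.sub_le _ _, ha⟩, rfl⟩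
  refine le_antisymm ?_ (Submodule.span_le.mpr ?_)
  · rintro v ⟨hv₁, hv₂⟩
    rw [RM_eq_span, hq] at hv₁
    obtain ⟨c, hc, rfl⟩ := (Finsupp.mem_span_image_iff_linearCombination F).mp hv₁
    have hbad := apply_eq_zero_of_hermForm_dualExp_eq_zero hq (fun j hj => (hc hj).1)
      (T := {a | ∑ i, dualExp q (a i) ≤ d₂})
      (fun a ha j _ hja => (sum_le_sum fun i _ => hja.dualExp_le i).trans ha)
      (fun a ha => hv₂ _ (hdual a ha))
    refine (Finsupp.mem_span_image_iff_linearCombination F).mpr ⟨c, fun j hj => ⟨hc hj, ?_⟩, rfl⟩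
    by_contra hle
    exact Finsupp.mem_support_iff.mp hj (hbad j (not_lt.mp hle))
  · rintro _ ⟨a, ⟨ha, hlt⟩, rfl⟩
    refine ⟨by rw [RM_eq_span, hq]; exact Submodule.subset_span ⟨a, ha, rfl⟩, ?_⟩
    rw [RM_eq_span, SetLike.mem_coe, mem_hermDualA_span_iff hdvd]
    rintro _ ⟨b, hb, rfl⟩
    by_contra hne
    have := hb.2
    have := sum_le_sum fun i (_ : i ∈ univ) =>
      dualExp_le_of_hermForm_monomialFn_ne_zero hq hne i
    omega

end TwoVariables

theorem ob_add_ob_le_iff {q : ℕ} (hq : 2 ≤ q) (x y d : ℕ) :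
    (ob (q ^ 2) (q * x) : ℤ) + ob (q ^ 2) (q * y) ≤ 2 * ((q : ℤ) ^ 2 - 1) - d - 1 ↔
      d < dualExp q x + dualExp q y := by
  have hN : 2 ≤ q ^ 2 := le_trans (by norm_num) (Nat.pow_le_pow_left hq 2)
  have hx := ob.le_sub_one hN (q * x)
  have hy := ob.le_sub_one hN (q * y)
  have hcast : ((q ^ 2 : ℕ) : ℤ) = (q : ℤ) ^ 2 := by push_cast; rfl
  unfold dualExp
  omega

theorem Uset_eq {F : Type*} [Field F] {q : ℕ} (hq : 2 ≤ q) (d₁ d₂ : ℕ) :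
    Uset F q d₁ d₂ = (fun a : Fin 2 → ℕ => X 0 ^ a 0 * X 1 ^ a 1) ''
      {a | a ∈ reducedExps (q ^ 2 - 1) d₁ ∧ d₂ < ∑ i, dualExp q (a i)} := by
  ext M
  constructor
  · rintro ⟨a₁, a₂, h₁, h₂, hdeg, hob, rfl⟩
    refine ⟨![a₁, a₂], ⟨⟨Fin.forall_fin_two.mpr ⟨h₁, h₂⟩, by simpa using hdeg⟩, ?_⟩, by simp⟩
    simpa using (ob_add_ob_le_iff hq a₁ a₂ d₂).mp hob
  · rintro ⟨a, ⟨⟨hle, hdeg⟩, hlt⟩, rfl⟩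
    refine ⟨a 0, a 1, hle 0, hle 1, by simpa [Fin.sum_univ_two] using hdeg, ?_, rfl⟩
    exact (ob_add_ob_le_iff hq _ _ d₂).mpr (by simpa [Fin.sum_univ_two] using hlt)

theorem stmt10_general {F : Type*} [Field F] [Fintype F] (q d₁ d₂ : ℕ)
    (hq : Fintype.card F = q ^ 2) :
    LinearIndependent F
      (fun M : Uset F q d₁ d₂ => evA F (M : MvPolynomial (Fin 2) F)) ∧
    Submodule.span F (evA F '' Uset F q d₁ d₂) = RM F d₁ ⊓ hermDualA q (RM F d₂) := by
  have hcomp : evA F ∘ (fun a : Fin 2 → ℕ => X 0 ^ a 0 * X 1 ^ a 1) = monomialFn F :=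
    funext evA_X_pow_mul_X_pow
  rw [Uset_eq (two_le_of_card_eq_sq hq), RM_inf_hermDualA_RM_eq_span hq, ← Set.image_comp, hcomp]
  refine ⟨LinearIndepOn.image_of_comp _ _ ?_, rfl⟩
  rw [hcomp]
  exact (linearIndepOn_monomialFn hq).mono fun a ha => ha.1.1

/-- the evaluations of the monomials in `U_{d₁,d₂}` form a basis of
`RM_{d₁}(q²,2) ∩ RM_{d₂}^{⊥h}(q²,2)`. -/
theorem stmt10 {F : Type*} [Field F] [Fintype F] (q d₁ d₂ : ℕ)
    (hq : Fintype.card F = q ^ 2)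
    (h1 : d₁ ≤ 2 * (q ^ 2 - 1)) (h2 : d₂ ≤ 2 * (q ^ 2 - 1)) :
    LinearIndependent F
      (fun M : Uset F q d₁ d₂ => evA F (M : MvPolynomial (Fin 2) F)) ∧
    Submodule.span F (evA F '' Uset F q d₁ d₂) = RM F d₁ ⊓ hermDualA q (RM F d₂) :=
  stmt10_general q d₁ d₂ hq
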